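/- Let (X,d) be a complete metric space and T : X → X be a (φ,F)-contraction such that F : (0,∞) → ℝ is continuous at the right at every point, φ : (0,∞) → (0,∞) satisfies condition (iii'), and T is contractive. Then T is a Picard operator. -/

import Mathlib

/-!
A (φ,F)-contraction that is contractive satisfies the Matkowski–Węgrzyk condition: if it failed
at some `ε > 0`, there would be pairs with `d(xₙ,yₙ) ↓ ε` and `ε < d(Txₙ,Tyₙ) < d(xₙ,yₙ)`, so right
continuity of `F` at `ε` forces `φ(d(xₙ,yₙ)) ≤ F(d(xₙ,yₙ)) - F(d(Txₙ,Tyₙ)) → 0`, against (iii').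

A contractive map with the Matkowski–Węgrzyk condition is a Picard operator: the step distances
of an orbit decrease to `0`, and once a step is shorter than the `δ` belonging to `ε / 2`, the
condition keeps all later points within `ε` of the current one. So orbits are Cauchy, their
limits are fixed points, and contractivity makes the fixed point unique.
-/

open Filter Topology

/-- `T` is a Picard operator: it has a unique fixed point `u` and every
sequence of iterates converges to `u`. -/
def IsPicardOperator {X : Type*} [MetricSpace X] (T : X → X) : Prop :=
  ∃ u : X, T u = u ∧ (∀ v : X, T v = v → v = u) ∧
    ∀ x : X, Tendsto (fun n => T^[n] x) atTop (𝓝 u)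

/-- `T` is contractive: `d(Tx,Ty) < d(x,y)` whenever `x ≠ y`. -/
def Contractive {X : Type*} [MetricSpace X] (T : X → X) : Prop :=
  ∀ x y : X, x ≠ y → dist (T x) (T y) < dist x y

/-- The Matkowski–Węgrzyk condition. -/
def MWCondition {X : Type*} [MetricSpace X] (T : X → X) : Prop :=
  ∀ ε > (0 : ℝ), ∃ δ > (0 : ℝ), ∀ x y : X,
    ε < dist x y → dist x y < ε + δ → dist (T x) (T y) ≤ ε

/-- `T` is a CJMP-contraction. -/
def IsCJMP {X : Type*} [MetricSpace X] (T : X → X) : Prop :=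
  Contractive T ∧ MWCondition T

def IsPhiFContraction {X : Type*} [MetricSpace X] (T : X → X) (φ F : ℝ → ℝ) : Prop :=
  ∀ x y : X, T x ≠ T y → φ (dist x y) + F (dist (T x) (T y)) ≤ F (dist x y)

section

variable {X : Type*} [MetricSpace X] {T : X → X}

namespace Contractive

theorem dist_le (hT : Contractive T) (x y : X) : dist (T x) (T y) ≤ dist x y := by
  rcases eq_or_ne x y with rfl | h
  · simp
  · exact (hT x y h).le

theorem lipschitzWith_one (hT : Contractive T) : LipschitzWith 1 T :=
  LipschitzWith.of_dist_le_mul fun x y => by simpa using hT.dist_le x y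

theorem eq_of_fixed (hT : Contractive T) {u v : X} (hu : T u = u) (hv : T v = v) : u = v := by
  by_contra h
  have := hT u v h
  rw [hu, hv] at this
  exact lt_irrefl _ this

end Contractive

namespace IsCJMP

theorem exists_dist_map_le (hT : IsCJMP T) {ε : ℝ} (hε : 0 < ε) :
    ∃ δ > 0, ∀ x y : X, dist x y < ε + δ → dist (T x) (T y) ≤ ε := by
  obtain ⟨δ, hδ, hMW⟩ := hT.2 ε hε
  refine ⟨δ, hδ, fun x y h => ?_⟩
  rcases le_or_gt (dist x y) ε with h' | h'
  · exact (hT.1.dist_le x y).trans h'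
  · exact hMW x y h' h

theorem tendsto_dist_iterate_succ (hT : IsCJMP T) (x : X) :
    Tendsto (fun n => dist (T^[n] x) (T^[n + 1] x)) atTop (𝓝 0) := by
  set d : ℕ → ℝ := fun n => dist (T^[n] x) (T^[n + 1] x)
  have hd_succ : ∀ n, d (n + 1) = dist (T (T^[n] x)) (T (T^[n + 1] x)) := fun n => by
    simp only [d, Function.iterate_succ_apply']
  have hanti : Antitone d :=
    antitone_nat_of_succ_le fun n => (hd_succ n).trans_le (hT.1.dist_le _ _)
  have hlim : Tendsto d atTop (𝓝 (⨅ n, d n)) :=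
    tendsto_atTop_ciInf hanti ⟨0, by rintro _ ⟨n, rfl⟩; exact dist_nonneg⟩
  set r := ⨅ n, d n
  have hr_le : ∀ n, r ≤ d n := hanti.le_of_tendsto hlim
  suffices r = 0 by rwa [this] at hlim
  by_contra hr
  have hr_pos : 0 < r := (ge_of_tendsto' hlim fun n => dist_nonneg).lt_of_ne' hr
  obtain ⟨δ, hδ, hT_δ⟩ := hT.exists_dist_map_le hr_pos
  obtain ⟨n, hn⟩ := (hlim.eventually (eventually_lt_nhds (lt_add_of_pos_right r hδ))).exists
  have h_le : d (n + 1) ≤ r := (hd_succ n).trans_le (hT_δ _ _ hn)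
  have h_lt : d (n + 2) < d (n + 1) := by
    rw [hd_succ (n + 1)]
    exact hT.1 _ _ (dist_pos.1 (hr_pos.trans_le (hr_le (n + 1))))
  linarith [hr_le (n + 2)]

theorem cauchySeq_iterate (hT : IsCJMP T) (x : X) : CauchySeq fun n => T^[n] x := by
  rw [Metric.cauchySeq_iff']
  intro ε hε
  obtain ⟨δ, hδ, hT_δ⟩ := hT.exists_dist_map_le (half_pos hε)
  set η := min δ (ε / 2)
  obtain ⟨N, hN⟩ := ((hT.tendsto_dist_iterate_succ x).eventually
    (eventually_lt_nhds (lt_min hδ (half_pos hε)))).exists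
  have hbound : ∀ k, dist (T^[N] x) (T^[N + k] x) < ε / 2 + η := by
    intro k
    induction k with
    | zero => simp only [add_zero, dist_self]; positivity
    | succ k ih =>
      have hstep : dist (T^[N + 1] x) (T^[N + (k + 1)] x) ≤ ε / 2 := by
        rw [← add_assoc, Function.iterate_succ_apply', Function.iterate_succ_apply']
        exact hT_δ _ _ (ih.trans_le (by gcongr; exact min_le_left _ _))
      calc dist (T^[N] x) (T^[N + (k + 1)] x)
          ≤ dist (T^[N] x) (T^[N + 1] x) + dist (T^[N + 1] x) (T^[N + (k + 1)] x) :=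
            dist_triangle _ _ _
        _ < η + ε / 2 := add_lt_add_of_lt_of_le hN hstep
        _ = ε / 2 + η := add_comm _ _
  refine ⟨N, fun n hn => ?_⟩
  obtain ⟨k, rfl⟩ := Nat.exists_eq_add_of_le hn
  rw [dist_comm]
  linarith [hbound k, min_le_right δ (ε / 2)]

theorem exists_fixed_tendsto_iterate [CompleteSpace X] (hT : IsCJMP T) (x : X) :
    ∃ u, T u = u ∧ Tendsto (fun n => T^[n] x) atTop (𝓝 u) := by
  obtain ⟨u, hu⟩ := cauchySeq_tendsto_of_complete (hT.cauchySeq_iterate x)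
  exact ⟨u, isFixedPt_of_tendsto_iterate hu hT.1.lipschitzWith_one.continuous.continuousAt, hu⟩

theorem isPicardOperator [CompleteSpace X] [Nonempty X] (hT : IsCJMP T) : IsPicardOperator T := by
  obtain ⟨u, hu, -⟩ := hT.exists_fixed_tendsto_iterate (Classical.arbitrary X)
  refine ⟨u, hu, fun v hv => hT.1.eq_of_fixed hv hu, fun x => ?_⟩
  obtain ⟨w, hw, hlim⟩ := hT.exists_fixed_tendsto_iterate x
  rwa [hT.1.eq_of_fixed hw hu] at hlim

end IsCJMP

theorem IsPhiFContraction.mwCondition {φ F : ℝ → ℝ} (hT : Contractive T)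
    (hcontr : IsPhiFContraction T φ F) (hφpos : ∀ t > (0 : ℝ), 0 < φ t)
    (hF : ∀ t > (0 : ℝ), Tendsto F (𝓝[>] t) (𝓝 (F t)))
    (hiii : ∀ t > (0 : ℝ), ∀ tn : ℕ → ℝ, (∀ n, t < tn n) → Tendsto tn atTop (𝓝 t) →
      0 < limsup (fun n => φ (tn n)) atTop) :
    MWCondition T := by
  intro ε hε
  by_contra! hcon
  choose x y ht_gt ht_lt hs_gt using fun n : ℕ => hcon (1 / (n + 1)) Nat.one_div_pos_of_nat
  set t := fun n => dist (x n) (y n)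
  set s := fun n => dist (T (x n)) (T (y n))
  have hs_lt : ∀ n, s n < t n := fun n =>
    hT _ _ (dist_pos.1 (hε.trans (ht_gt n)))
  have ht : Tendsto t atTop (𝓝 ε) := by
    have := add_zero ε ▸ tendsto_one_div_add_atTop_nhds_zero_nat.const_add ε
    exact tendsto_of_tendsto_of_tendsto_of_le_of_le tendsto_const_nhds this
      (fun n => (ht_gt n).le) (fun n => (ht_lt n).le)
  have hs : Tendsto s atTop (𝓝 ε) :=
    tendsto_of_tendsto_of_tendsto_of_le_of_le tendsto_const_nhds ht
      (fun n => (hs_gt n).le) (fun n => (hs_lt n).le)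
  have hF_diff : Tendsto (fun n => F (t n) - F (s n)) atTop (𝓝 0) := by
    have hFt := (hF ε hε).comp (tendsto_nhdsWithin_iff.2 ⟨ht, .of_forall ht_gt⟩)
    have hFs := (hF ε hε).comp (tendsto_nhdsWithin_iff.2 ⟨hs, .of_forall hs_gt⟩)
    simpa using hFt.sub hFs
  have hφ : Tendsto (fun n => φ (t n)) atTop (𝓝 0) :=
    tendsto_of_tendsto_of_tendsto_of_le_of_le tendsto_const_nhds hF_diff
      (fun n => (hφpos _ (hε.trans (ht_gt n))).le)
      (fun n => le_sub_iff_add_le.2 (hcontr _ _ (dist_pos.1 (hε.trans (hs_gt n)))))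
  exact (hiii ε hε t ht_gt ht).ne' hφ.limsup_eq

end

theorem stmt_12 {X : Type*} [MetricSpace X] [CompleteSpace X] [Nonempty X] (T : X → X)
    (hT : Contractive T) (F φ : ℝ → ℝ) (hφpos : ∀ t > (0 : ℝ), 0 < φ t)
    (hF : ∀ t > (0 : ℝ), Tendsto F (𝓝[>] t) (𝓝 (F t)))
    (hiii : ∀ t > (0 : ℝ), ∀ tn : ℕ → ℝ, (∀ n, t < tn n) → Tendsto tn atTop (𝓝 t) →
      0 < limsup (fun n => φ (tn n)) atTop)
    (hcontr : ∀ x y : X, T x ≠ T y →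
      φ (dist x y) + F (dist (T x) (T y)) ≤ F (dist x y)) :
    IsPicardOperator T :=
  IsCJMP.isPicardOperator ⟨hT, IsPhiFContraction.mwCondition hT hcontr hφpos hF hiii⟩
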